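/- arXiv:1202.6043 — 2 statements merged into one kernel-verified Lean document; each statement's English description precedes it below -/
import Mathlib

section
/- Let G be a finite labelled graph, G' a finite undirected graph, n ≥ 1, and π : V(G') → V(G) a map such that whenever u and w are adjacent in G', either π(u) = π(w) or π(u) and π(w) are adjacent in G. Call a vertex v of G safe with respect to a placement of n cops in G' if no cop's projection under π is joined to v by an unprotected edge of G (an unprotected vertex being regarded as joined to itself by an unprotected edge). Assume: (i) for every placement of n cops in G' and every vertex v of G safe with respect to it, the fiber π^{-1}(v) contains a vertex neither occupied by nor adjacent to any cop; and (ii) for every position of n cops and the robber in G' and every vertex v of G that equals or is adjacent in G to π(robber) and is safe with respect to the cops' placement, the robber can in one move (staying or moving along an edge of G') reach a vertex of π^{-1}(v) neither occupied by nor adjacent to any cop. Then, if Robber has a winning strategy against n cops in the game C&Rp on G, Robber has a winning strategy against n cops in the game C&R on G'. -/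
/-- A labelled graph: an undirected graph, loops allowed, each edge labelled
protected (`pro`) or unprotected (`unp`). -/
structure LabGraph (V : Type) where
  pro : V → V → Prop
  unp : V → V → Prop
  pro_symm : ∀ v w, pro v w → pro w v
  unp_symm : ∀ v w, unp v w → unp w v

/-- Adjacency in the underlying graph of a labelled graph. -/
def labAdj {V : Type} (G : LabGraph V) (v w : V) : Prop := G.pro v w ∨ G.unp v w

/-- A single token move in a labelled graph: stay put or move along an edge. -/
def labStep {V : Type} (G : LabGraph V) (v w : V) : Prop := v = w ∨ labAdj G v w

/-- A single token move in a simple graph: stay put or move along an edge. -/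
def sStep {V : Type} (G : SimpleGraph V) (v w : V) : Prop := v = w ∨ G.Adj v w

/-- A game position: the placement of the `n` cops and the robber's vertex. -/
abbrev Pos (V : Type) (n : ℕ) := (Fin n → V) × V

/-- A robber strategy: from the history of positions (most recent first),
choose the robber's next vertex. -/
abbrev RStrat (V : Type) (n : ℕ) := List (Pos V n) → V

/-- A cops strategy: from the history of positions and the robber's newly
chosen vertex, choose the cops' new placement. -/
abbrev CStrat (V : Type) (n : ℕ) := List (Pos V n) → V → (Fin n → V)

/-- A robber strategy is legal w.r.t. a step relation `st` if it always
chooses a vertex reachable in one move from the robber's current vertex. -/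
def RLegal {V : Type} {n : ℕ} (st : V → V → Prop) (ρ : RStrat V n) : Prop :=
  ∀ (p : Pos V n) (h : List (Pos V n)), st p.2 (ρ (p :: h))

/-- A cops strategy is legal w.r.t. a step relation `st` if every cop always
moves to a vertex reachable in one move from its current vertex. -/
def CLegal {V : Type} {n : ℕ} (st : V → V → Prop) (σ : CStrat V n) : Prop :=
  ∀ (p : Pos V n) (h : List (Pos V n)) (r' : V) (i : Fin n),
    st (p.1 i) (σ (p :: h) r' i)

/-- The history (most recent position first) of the play determined by the
strategies `σ` and `ρ` from the initial position `init`.  In each round the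
robber moves first and then all the cops move simultaneously. -/
def hist {V : Type} {n : ℕ} (σ : CStrat V n) (ρ : RStrat V n) (init : Pos V n) :
    ℕ → List (Pos V n)
  | 0 => [init]
  | t + 1 =>
      let h := hist σ ρ init t
      let r' := ρ h
      (σ h r', r') :: h

/-- The position reached after `t` complete rounds of play. -/
def play {V : Type} {n : ℕ} (σ : CStrat V n) (ρ : RStrat V n) (init : Pos V n)
    (t : ℕ) : Pos V n :=
  match hist σ ρ init t with
  | [] => init
  | p :: _ => p

/-- Capture in the plain Cops and Robber game: at some time the robber is on
the same vertex as a cop (either initially, or just after the robber's move,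
or just after the cops' move). -/
def crCapture {V : Type} {n : ℕ} (pl : ℕ → Pos V n) : Prop :=
  (∃ i, (pl 0).1 i = (pl 0).2) ∨
    ∃ t, (∃ i, (pl t).1 i = (pl (t + 1)).2) ∨
      (∃ i, (pl (t + 1)).1 i = (pl (t + 1)).2)

/-- Capture in Cops and Robber with protection: at some round, just after the
robber's move, some cop can move onto the robber's vertex along an
unprotected edge (an unprotected loop allowing capture while standing on the
robber's vertex). -/
def crpCapture {V : Type} (G : LabGraph V) {n : ℕ} (pl : ℕ → Pos V n) : Prop :=
  ∃ t, ∃ i, G.unp ((pl t).1 i) ((pl (t + 1)).2)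

/-- Cops have a winning strategy in C&R on `G` from the prescribed position
`init`, Robber to move. -/
def CopsWinFromCR {V : Type} (G : SimpleGraph V) {n : ℕ} (init : Pos V n) : Prop :=
  ∃ σ : CStrat V n, CLegal (sStep G) σ ∧
    ∀ ρ : RStrat V n, RLegal (sStep G) ρ → crCapture (play σ ρ init)

/-- Robber has a winning strategy in C&R on `G` from the prescribed position
`init`, Robber to move. -/
def RobberWinFromCR {V : Type} (G : SimpleGraph V) {n : ℕ} (init : Pos V n) : Prop :=
  ∃ ρ : RStrat V n, RLegal (sStep G) ρ ∧
    ∀ σ : CStrat V n, CLegal (sStep G) σ → ¬ crCapture (play σ ρ init)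

/-- Cops have a winning strategy with `n` cops in the game C&R on `G` with
elective initial positions: Cops first places the cops, then Robber places
the robber and the pursuit starts, Robber moving first. -/
def CopsWinCR {V : Type} (G : SimpleGraph V) (n : ℕ) : Prop :=
  ∃ (c₀ : Fin n → V) (σ : CStrat V n), CLegal (sStep G) σ ∧
    ∀ (r₀ : V) (ρ : RStrat V n), RLegal (sStep G) ρ →
      crCapture (play σ ρ (c₀, r₀))

/-- Robber has a winning strategy with `n` cops in the game C&R on `G` with
elective initial positions. -/
def RobberWinCR {V : Type} (G : SimpleGraph V) (n : ℕ) : Prop :=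
  ∀ c₀ : Fin n → V, ∃ (r₀ : V) (ρ : RStrat V n), RLegal (sStep G) ρ ∧
    ∀ σ : CStrat V n, CLegal (sStep G) σ → ¬ crCapture (play σ ρ (c₀, r₀))

/-- Cops have a winning strategy in C&Rp on the labelled graph `G` from the
prescribed position `init`, Robber to move (the game `C&Rp*`). -/
def CopsWinFromCRp {V : Type} (G : LabGraph V) {n : ℕ} (init : Pos V n) : Prop :=
  ∃ σ : CStrat V n, CLegal (labStep G) σ ∧
    ∀ ρ : RStrat V n, RLegal (labStep G) ρ → crpCapture G (play σ ρ init)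

/-- Robber has a winning strategy in C&Rp on the labelled graph `G` from the
prescribed position `init`, Robber to move. -/
def RobberWinFromCRp {V : Type} (G : LabGraph V) {n : ℕ} (init : Pos V n) : Prop :=
  ∃ ρ : RStrat V n, RLegal (labStep G) ρ ∧
    ∀ σ : CStrat V n, CLegal (labStep G) σ → ¬ crpCapture G (play σ ρ init)

/-- Cops have a winning strategy with `n` cops in the game C&Rp on the
labelled graph `G` with elective initial positions. -/
def CopsWinCRp {V : Type} (G : LabGraph V) (n : ℕ) : Prop :=
  ∃ (c₀ : Fin n → V) (σ : CStrat V n), CLegal (labStep G) σ ∧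
    ∀ (r₀ : V) (ρ : RStrat V n), RLegal (labStep G) ρ →
      crpCapture G (play σ ρ (c₀, r₀))

/-- Robber has a winning strategy with `n` cops in the game C&Rp on the
labelled graph `G` with elective initial positions. -/
def RobberWinCRp {V : Type} (G : LabGraph V) (n : ℕ) : Prop :=
  ∀ c₀ : Fin n → V, ∃ (r₀ : V) (ρ : RStrat V n), RLegal (labStep G) ρ ∧
    ∀ σ : CStrat V n, CLegal (labStep G) σ → ¬ crpCapture G (play σ ρ (c₀, r₀))

section Aux
variable {V V' : Type} {n : ℕ}

lemma hist_cons (σ : CStrat V n) (ρ : RStrat V n) (init : Pos V n) (t : ℕ) :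
    hist σ ρ init t = play σ ρ init t :: (hist σ ρ init t).tail := by
  cases t <;> rfl

lemma hist_length (σ : CStrat V n) (ρ : RStrat V n) (init : Pos V n) (t : ℕ) :
    (hist σ ρ init t).length = t + 1 := by
  induction t with
  | zero => rfl
  | succ t ih => simpa [hist] using ih

lemma play_zero (σ : CStrat V n) (ρ : RStrat V n) (init : Pos V n) :
    play σ ρ init 0 = init := rfl

lemma play_succ (σ : CStrat V n) (ρ : RStrat V n) (init : Pos V n) (t : ℕ) :
    play σ ρ init (t + 1) =
      (σ (hist σ ρ init t) (ρ (hist σ ρ init t)), ρ (hist σ ρ init t)) := rfl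

def shiftR (ρ : RStrat V n) (i0 : Pos V n) : RStrat V n := fun h => ρ (h ++ [i0])

open Classical in
noncomputable def shiftC (σ : CStrat V n) (i0 : Pos V n) : CStrat V n :=
  fun h r' => match h with
  | [] => i0.1
  | p :: hs => if hs = [] then p.1 else σ (p :: hs.dropLast) r'

lemma shift_hist (σ : CStrat V n) (ρ : RStrat V n) (i0 : Pos V n) (t : ℕ) :
    hist (shiftC σ i0) ρ i0 (t + 1) =
      hist σ (shiftR ρ i0) (i0.1, ρ [i0]) t ++ [i0] := by
  induction t with
  | zero =>
      show (shiftC σ i0 [i0] (ρ [i0]), ρ [i0]) :: [i0] = [(i0.1, ρ [i0]), i0]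
      simp [shiftC]
  | succ t ih =>
      show (shiftC σ i0 (hist (shiftC σ i0) ρ i0 (t+1)) _, _) :: hist (shiftC σ i0) ρ i0 (t+1)
        = (σ (hist σ (shiftR ρ i0) (i0.1, ρ [i0]) t) _, _) :: hist σ (shiftR ρ i0) (i0.1, ρ [i0]) t ++ [i0]
      rw [ih]
      have hc := hist_cons σ (shiftR ρ i0) (i0.1, ρ [i0]) t
      rw [hc]
      simp [shiftC, shiftR]

end Aux
section Aux2
variable {V V' : Type} {n : ℕ}

lemma shift_play (σ : CStrat V n) (ρ : RStrat V n) (i0 : Pos V n) (t : ℕ) :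
    play (shiftC σ i0) ρ i0 (t + 1) = play σ (shiftR ρ i0) (i0.1, ρ [i0]) t := by
  have h1 := hist_cons (shiftC σ i0) ρ i0 (t + 1)
  have h2 := hist_cons σ (shiftR ρ i0) (i0.1, ρ [i0]) t
  have h3 := shift_hist σ ρ i0 t
  rw [h1, h2] at h3
  exact (List.cons.injEq _ _ _ _ ▸ h3).1

def projHist (π : V' → V) (ρ : RStrat V n) (r₁ : V) : List (Pos V' n) → List (Pos V n)
  | [] => []
  | p :: h => (fun i => π (p.1 i),
      if h.isEmpty then r₁ else ρ (projHist π ρ r₁ h)) :: projHist π ρ r₁ h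

open Classical in
noncomputable def robStrat (G : LabGraph V) (G' : SimpleGraph V') (π : V' → V)
    (hii : ∀ (c : Fin n → V') (rob : V') (v : V),
      (v = π rob ∨ G.pro (π rob) v ∨ G.unp (π rob) v) →
      (∀ i, ¬ G.unp (π (c i)) v) →
      ∃ u : V', (rob = u ∨ G'.Adj rob u) ∧ π u = v ∧
        ∀ i, c i ≠ u ∧ ¬ G'.Adj (c i) u)
    (ρ : RStrat V n) (r₁ : V) (u₀ : V') : RStrat V' n
  | [] => u₀
  | p :: h =>
    if hc : (ρ (projHist π ρ r₁ (p :: h)) = π p.2 ∨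
        G.pro (π p.2) (ρ (projHist π ρ r₁ (p :: h))) ∨
        G.unp (π p.2) (ρ (projHist π ρ r₁ (p :: h)))) ∧
        (∀ i, ¬ G.unp (π (p.1 i)) (ρ (projHist π ρ r₁ (p :: h))))
    then (hii p.1 p.2 _ hc.1 hc.2).choose
    else p.2

open Classical in
noncomputable def copStrat (G : LabGraph V) (π : V' → V) (pl' : ℕ → Pos V' n) :
    CStrat V n :=
  fun h _ i => match h with
  | [] => π ((pl' 0).1 i)
  | p :: hs =>
      if labStep G (p.1 i) (π ((pl' (hs.length + 1)).1 i))
      then π ((pl' (hs.length + 1)).1 i) else p.1 i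

end Aux2

/-- If `π : V(G') → V(G)` maps edges of `G'` to edges of `G` or to single
vertices, and the fiber/escape properties (i) and (ii) hold, then a winning
Robber strategy for C&Rp on `G` against `n` cops yields a winning Robber
strategy for C&R on `G'` against `n` cops. -/
theorem statement7 {V V' : Type} [Fintype V] [Fintype V'] (G : LabGraph V)
    (G' : SimpleGraph V') (n : ℕ) (hn : 1 ≤ n) (π : V' → V)
    (hhom : ∀ u w : V', G'.Adj u w →
      π u = π w ∨ G.pro (π u) (π w) ∨ G.unp (π u) (π w))
    (hi : ∀ (c : Fin n → V') (v : V), (∀ i, ¬ G.unp (π (c i)) v) →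
      ∃ u : V', π u = v ∧ ∀ i, c i ≠ u ∧ ¬ G'.Adj (c i) u)
    (hii : ∀ (c : Fin n → V') (rob : V') (v : V),
      (v = π rob ∨ G.pro (π rob) v ∨ G.unp (π rob) v) →
      (∀ i, ¬ G.unp (π (c i)) v) →
      ∃ u : V', (rob = u ∨ G'.Adj rob u) ∧ π u = v ∧
        ∀ i, c i ≠ u ∧ ¬ G'.Adj (c i) u)
    (hrob : RobberWinCRp G n) :
    RobberWinCR G' n := by
  classical
  intro c₀'
  set c₀ : Fin n → V := fun i => π (c₀' i) with hc₀def
  obtain ⟨r₀, ρ0, hρ0leg, hρ0win⟩ := hrob c₀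
  set i0 : Pos V n := (c₀, r₀) with hi0def
  set r₁ : V := ρ0 [i0] with hr₁def
  set ρ : RStrat V n := shiftR ρ0 i0 with hρdef
  have hρleg : RLegal (labStep G) ρ := by
    intro p h
    have := hρ0leg p (h ++ [i0])
    simpa [hρdef, shiftR] using this
  have hρwin : ∀ σ : CStrat V n, CLegal (labStep G) σ →
      ¬ crpCapture G (play σ ρ (c₀, r₁)) := by
    intro σ hσ hcap
    have hσleg : CLegal (labStep G) (shiftC σ i0) := by
      intro p h r' i
      by_cases hh : h = []
      · subst hh
        simp only [shiftC, if_pos rfl]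
        exact Or.inl rfl
      · simp only [shiftC, if_neg hh]
        exact hσ p h.dropLast r' i
    apply hρ0win (shiftC σ i0) hσleg
    obtain ⟨t, i, hti⟩ := hcap
    refine ⟨t + 1, i, ?_⟩
    have e1 : play (shiftC σ i0) ρ0 i0 (t + 1) = play σ ρ (c₀, r₁) t := by
      rw [shift_play σ ρ0 i0 t]
    have e2 : play (shiftC σ i0) ρ0 i0 (t + 2) = play σ ρ (c₀, r₁) (t + 1) := by
      rw [shift_play σ ρ0 i0 (t + 1)]
    rw [e1, e2]
    exact hti
  have hsafe : ∀ i, ¬ G.unp (π (c₀' i)) r₁ := by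
    intro i hunp
    have hleg : CLegal (labStep G) (fun h _ => match h with
        | [] => c₀ | p :: _ => p.1) := by
      intro p h r' j
      exact Or.inl rfl
    apply hρ0win _ hleg
    exact ⟨0, i, hunp⟩
  obtain ⟨u₀, hu₀π, hu₀⟩ := hi c₀' r₁ hsafe
  set ρ' : RStrat V' n := robStrat G G' π hii ρ r₁ u₀ with hρ'def
  have hρ'leg : RLegal (sStep G') ρ' := by
    intro p h
    rw [hρ'def]
    show sStep G' p.2 (robStrat G G' π hii ρ r₁ u₀ (p :: h))
    rw [robStrat]
    split
    · next hc => exact (hii p.1 p.2 _ hc.1 hc.2).choose_spec.1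
    · exact Or.inl rfl
  refine ⟨u₀, ρ', hρ'leg, ?_⟩
  intro σ' hσ'leg hcap
  set σ : CStrat V n := copStrat G π (play σ' ρ' (c₀', u₀)) with hσdef
  have hσleg : CLegal (labStep G) σ := by
    intro p h r' i
    rw [hσdef]
    show labStep G (p.1 i) (copStrat G π (play σ' ρ' (c₀', u₀)) (p :: h) r' i)
    rw [copStrat]
    split
    · next hc => exact hc
    · exact Or.inl rfl
  have hCRP : ∀ t i, ¬ G.unp ((play σ ρ (c₀, r₁) t).1 i)
      ((play σ ρ (c₀, r₁) (t + 1)).2) := by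
    intro t i h
    exact hρwin σ hσleg ⟨t, i, h⟩
  -- the correspondence invariant
  have step : ∀ t : ℕ,
      (hist σ ρ (c₀, r₁) t = projHist π ρ r₁ (hist σ' ρ' (c₀', u₀) t) ∧
        π ((play σ' ρ' (c₀', u₀) t).2) = (play σ ρ (c₀, r₁) t).2) →
      ((hist σ ρ (c₀, r₁) (t + 1) = projHist π ρ r₁ (hist σ' ρ' (c₀', u₀) (t + 1)) ∧
        π ((play σ' ρ' (c₀', u₀) (t + 1)).2) = (play σ ρ (c₀, r₁) (t + 1)).2) ∧
        (∀ i, (play σ' ρ' (c₀', u₀) t).1 i ≠ (play σ' ρ' (c₀', u₀) (t + 1)).2 ∧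
          ¬ G'.Adj ((play σ' ρ' (c₀', u₀) t).1 i) ((play σ' ρ' (c₀', u₀) (t + 1)).2))) := by
    intro t ⟨hA, hB⟩
    have hH't := hist_cons σ' ρ' (c₀', u₀) t
    have hHt := hist_cons σ ρ (c₀, r₁) t
    have hA' := hA
    rw [hHt, hH't] at hA'
    simp only [projHist] at hA'
    have hA1 := (List.cons.injEq _ _ _ _ ▸ hA').1
    have hc1 : ∀ i, (play σ ρ (c₀, r₁) t).1 i = π ((play σ' ρ' (c₀', u₀) t).1 i) := by
      intro i
      exact congrFun (congrArg Prod.fst hA1) i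
    have hv : ρ (projHist π ρ r₁
        ((play σ' ρ' (c₀', u₀) t) :: (hist σ' ρ' (c₀', u₀) t).tail)) =
        ρ (hist σ ρ (c₀, r₁) t) := by
      rw [← hH't, ← hA]
    have hc : (ρ (projHist π ρ r₁
          ((play σ' ρ' (c₀', u₀) t) :: (hist σ' ρ' (c₀', u₀) t).tail)) =
          π (play σ' ρ' (c₀', u₀) t).2 ∨
        G.pro (π (play σ' ρ' (c₀', u₀) t).2) (ρ (projHist π ρ r₁
          ((play σ' ρ' (c₀', u₀) t) :: (hist σ' ρ' (c₀', u₀) t).tail))) ∨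
        G.unp (π (play σ' ρ' (c₀', u₀) t).2) (ρ (projHist π ρ r₁
          ((play σ' ρ' (c₀', u₀) t) :: (hist σ' ρ' (c₀', u₀) t).tail)))) ∧
        (∀ i, ¬ G.unp (π ((play σ' ρ' (c₀', u₀) t).1 i)) (ρ (projHist π ρ r₁
          ((play σ' ρ' (c₀', u₀) t) :: (hist σ' ρ' (c₀', u₀) t).tail)))) := by
      constructor
      · have hstep := hρleg (play σ ρ (c₀, r₁) t) (hist σ ρ (c₀, r₁) t).tail
        rw [← hHt] at hstep
        rw [hv, hB]
        simp only [labStep, labAdj] at hstep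
        rcases hstep with h | h | h
        · exact Or.inl h.symm
        · exact Or.inr (Or.inl h)
        · exact Or.inr (Or.inr h)
      · intro i
        rw [hv]
        have h := hCRP t i
        rw [hc1 i] at h
        exact h
    have hval : ρ' (hist σ' ρ' (c₀', u₀) t) =
        (hii (play σ' ρ' (c₀', u₀) t).1 (play σ' ρ' (c₀', u₀) t).2 _ hc.1 hc.2).choose := by
      conv_lhs => rw [hρ'def, hH't]
      show robStrat G G' π hii ρ r₁ u₀ (_ :: _) = _
      rw [robStrat]
      exact dif_pos hc
    have hspec := (hii (play σ' ρ' (c₀', u₀) t).1 (play σ' ρ' (c₀', u₀) t).2 _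
      hc.1 hc.2).choose_spec
    have hu' : (play σ' ρ' (c₀', u₀) (t + 1)).2 =
        (hii (play σ' ρ' (c₀', u₀) t).1 (play σ' ρ' (c₀', u₀) t).2 _ hc.1 hc.2).choose := by
      rw [play_succ]
      exact hval
    have hBnew : π ((play σ' ρ' (c₀', u₀) (t + 1)).2) = (play σ ρ (c₀, r₁) (t + 1)).2 := by
      rw [hu', hspec.2.1, hv, play_succ]
    have hE : ∀ i, (play σ' ρ' (c₀', u₀) t).1 i ≠ (play σ' ρ' (c₀', u₀) (t + 1)).2 ∧
        ¬ G'.Adj ((play σ' ρ' (c₀', u₀) t).1 i) ((play σ' ρ' (c₀', u₀) (t + 1)).2) := by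
      intro i
      rw [hu']
      exact hspec.2.2 i
    refine ⟨⟨?_, hBnew⟩, hE⟩
    -- A (t+1)
    have htl : (hist σ ρ (c₀, r₁) t).tail.length = t := by
      have hl := hist_length σ ρ (c₀, r₁) t
      rw [hHt] at hl
      simpa using hl
    have hne : (hist σ' ρ' (c₀', u₀) t).isEmpty = false := by
      rw [hH't]; rfl
    show hist σ ρ (c₀, r₁) (t + 1) = projHist π ρ r₁ (hist σ' ρ' (c₀', u₀) (t + 1))
    have lhs : hist σ ρ (c₀, r₁) (t + 1) =
        (σ (hist σ ρ (c₀, r₁) t) (ρ (hist σ ρ (c₀, r₁) t)),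
          ρ (hist σ ρ (c₀, r₁) t)) :: hist σ ρ (c₀, r₁) t := rfl
    have rhs : hist σ' ρ' (c₀', u₀) (t + 1) =
        (σ' (hist σ' ρ' (c₀', u₀) t) (ρ' (hist σ' ρ' (c₀', u₀) t)),
          ρ' (hist σ' ρ' (c₀', u₀) t)) :: hist σ' ρ' (c₀', u₀) t := rfl
    rw [lhs, rhs]
    simp only [projHist, hne]
    rw [if_neg (by simp)]
    refine congrArg₂ List.cons ?_ hA
    refine Prod.ext ?_ ?_
    · -- cops component
      funext i
      show σ (hist σ ρ (c₀, r₁) t) (ρ (hist σ ρ (c₀, r₁) t)) i =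
        π ((σ' (hist σ' ρ' (c₀', u₀) t) (ρ' (hist σ' ρ' (c₀', u₀) t))) i)
      have hcop : (σ' (hist σ' ρ' (c₀', u₀) t) (ρ' (hist σ' ρ' (c₀', u₀) t))) i =
          (play σ' ρ' (c₀', u₀) (t + 1)).1 i := rfl
      rw [hcop]
      have hstep' : sStep G' ((play σ' ρ' (c₀', u₀) t).1 i)
          ((play σ' ρ' (c₀', u₀) (t + 1)).1 i) := by
        have := hσ'leg (play σ' ρ' (c₀', u₀) t) (hist σ' ρ' (c₀', u₀) t).tail
          (ρ' (hist σ' ρ' (c₀', u₀) t)) i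
        rw [← hH't] at this
        exact this
      have hlab : labStep G ((play σ ρ (c₀, r₁) t).1 i)
          (π ((play σ' ρ' (c₀', u₀) (t + 1)).1 i)) := by
        rw [hc1 i]
        rcases hstep' with h | h
        · exact Or.inl (congrArg π h)
        · rcases hhom _ _ h with h' | h' | h'
          · exact Or.inl h'
          · exact Or.inr (Or.inl h')
          · exact Or.inr (Or.inr h')
      rw [hσdef, hHt]
      show copStrat G π (play σ' ρ' (c₀', u₀))
        (play σ ρ (c₀, r₁) t :: (hist σ ρ (c₀, r₁) t).tail) _ i = _
      rw [copStrat]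
      rw [htl]
      rw [if_pos hlab]
    · -- robber component
      show ρ (hist σ ρ (c₀, r₁) t) = ρ (projHist π ρ r₁ (hist σ' ρ' (c₀', u₀) t))
      rw [← hA]
  have base : hist σ ρ (c₀, r₁) 0 = projHist π ρ r₁ (hist σ' ρ' (c₀', u₀) 0) ∧
      π ((play σ' ρ' (c₀', u₀) 0).2) = (play σ ρ (c₀, r₁) 0).2 := by
    constructor
    · show [((c₀ : Fin n → V), r₁)] = projHist π ρ r₁ [(c₀', u₀)]
      simp only [projHist]
      rfl
    · exact hu₀π
  have main : ∀ t, hist σ ρ (c₀, r₁) t = projHist π ρ r₁ (hist σ' ρ' (c₀', u₀) t) ∧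
      π ((play σ' ρ' (c₀', u₀) t).2) = (play σ ρ (c₀, r₁) t).2 := by
    intro t
    induction t with
    | zero => exact base
    | succ t ih => exact (step t ih).1
  have Efact := fun t => (step t (main t)).2
  -- derive the contradiction from capture
  rcases hcap with ⟨i, h0⟩ | ⟨t, ⟨i, h1⟩ | ⟨i, h2⟩⟩
  · exact (hu₀ i).1 h0
  · exact (Efact t i).1 h1
  · have hstep' : sStep G' ((play σ' ρ' (c₀', u₀) t).1 i)
        ((play σ' ρ' (c₀', u₀) (t + 1)).1 i) := by
      have := hσ'leg (play σ' ρ' (c₀', u₀) t) (hist σ' ρ' (c₀', u₀) t).tail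
        (ρ' (hist σ' ρ' (c₀', u₀) t)) i
      rw [← hist_cons σ' ρ' (c₀', u₀) t] at this
      exact this
    rcases hstep' with h | h
    · exact (Efact t i).1 (h.trans h2)
    · rw [h2] at h
      exact (Efact t i).2 h
end

section
/- Let G be a finite labelled graph with vertex set V, let P be a finite undirected graph, and let G' be the associated graph on V × V(P) with projection π onto the first coordinate. Then for every placement of finitely many cops and the robber on vertices of G': if every vertex v of G that equals or is adjacent in G to π(robber) is joined by an unprotected edge of G to the projection of some cop (an unprotected vertex being regarded as joined to itself by an unprotected edge), then every vertex of G' that equals or is adjacent in G' to the robber's vertex is occupied by or adjacent in G' to some cop. -/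
/-- The graph `G'` associated to a labelled graph `G` and a graph `P`:
distinct vertices `(v,p)`, `(w,q)` are adjacent iff `v` and `w` are joined by
an unprotected edge of `G`, or `v = w`, or `v` and `w` are joined by a
protected edge of `G` and `p`, `q` are adjacent in `P`. -/
def prodGraph {V W : Type} (G : LabGraph V) (P : SimpleGraph W) :
    SimpleGraph (V × W) where
  Adj x y := x ≠ y ∧
    (G.unp x.1 y.1 ∨ x.1 = y.1 ∨ (G.pro x.1 y.1 ∧ P.Adj x.2 y.2))
  symm := by
    constructor
    rintro x y ⟨hne, h | h | ⟨h1, h2⟩⟩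
    · exact ⟨hne.symm, Or.inl (G.unp_symm _ _ h)⟩
    · exact ⟨hne.symm, Or.inr (Or.inl h.symm)⟩
    · exact ⟨hne.symm, Or.inr (Or.inr ⟨G.pro_symm _ _ h1, h2.symm⟩)⟩
  loopless := ⟨fun x h => h.1 rfl⟩

/-! An unprotected edge `v w` of `G` joins every vertex of the fibre over `v` to every vertex of the
fibre over `w` in `G'`, and `π` maps each move of `G'` to a move of `G`. -/

section prodGraph

variable {V W : Type} {G : LabGraph V} {P : SimpleGraph W} {x y : V × W}

theorem eq_or_prodGraph_adj_of_unp (h : G.unp x.1 y.1) : x = y ∨ (prodGraph G P).Adj x y :=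
  or_iff_not_imp_left.2 fun hne => ⟨hne, Or.inl h⟩

theorem fst_eq_or_pro_or_unp_of_prodGraph_adj (h : (prodGraph G P).Adj x y) :
    y.1 = x.1 ∨ G.pro x.1 y.1 ∨ G.unp x.1 y.1 := by
  obtain ⟨-, hunp | hfst | ⟨hpro, -⟩⟩ := h
  exacts [Or.inr (Or.inr hunp), Or.inl hfst.symm, Or.inr (Or.inl hpro)]

end prodGraph

theorem statement9_general {V W : Type} (G : LabGraph V)
    (P : SimpleGraph W) (m : ℕ) (c : Fin m → V × W) (rob : V × W)
    (hdoom : ∀ v : V, (v = rob.1 ∨ G.pro rob.1 v ∨ G.unp rob.1 v) →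
      ∃ i, G.unp ((c i).1) v) :
    ∀ u : V × W, (u = rob ∨ (prodGraph G P).Adj rob u) →
      ∃ i, c i = u ∨ (prodGraph G P).Adj (c i) u := by
  intro u hu
  have hstep : u.1 = rob.1 ∨ G.pro rob.1 u.1 ∨ G.unp rob.1 u.1 := by
    rcases hu with rfl | hadj
    · exact Or.inl rfl
    · exact fst_eq_or_pro_or_unp_of_prodGraph_adj hadj
  obtain ⟨i, hi⟩ := hdoom u.1 hstep
  exact ⟨i, eq_or_prodGraph_adj_of_unp hi⟩

/-- In the associated graph `G'` of a labelled graph `G` and a graph `P`: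
if every vertex `v` of `G` equal or adjacent in `G` to the projection of the
robber is joined by an unprotected edge of `G` to the projection of some cop,
then every vertex of `G'` equal or adjacent to the robber's vertex is
occupied by or adjacent to some cop. -/
theorem statement9 {V W : Type} [Fintype V] [Fintype W] (G : LabGraph V)
    (P : SimpleGraph W) (m : ℕ) (c : Fin m → V × W) (rob : V × W)
    (hdoom : ∀ v : V, (v = rob.1 ∨ G.pro rob.1 v ∨ G.unp rob.1 v) →
      ∃ i, G.unp ((c i).1) v) :
    ∀ u : V × W, (u = rob ∨ (prodGraph G P).Adj rob u) →
      ∃ i, c i = u ∨ (prodGraph G P).Adj (c i) u :=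
  statement9_general G P m c rob hdoom
end
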